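/- If 0 < U₁ < U₂ and 0 < T < τ₂ with T < τ₁, then Δ₁(T) < Δ₂(T), where Δ_k(T) is the unique nonnegative solution of the simple gap equation with coupling U_k at temperature T (with Δ_k(T) = 0 for T ≥ τ_k). -/

import Mathlib

/-!
Since `E ↦ tanh (E / 2T) / E` decreases on `(0, ∞)`, the gap integral
`I(Δ) = ∫_ε^ω tanh (√(ξ² + Δ²) / 2T) / √(ξ² + Δ²) dξ` is antitone in `Δ ≥ 0`.
If `Δ₂ ≤ Δ₁`, the gap equations would give `1 / U₁ = I(Δ₁) ≤ I(Δ₂) = 1 / U₂`,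
contradicting `U₁ < U₂`.
-/

open Real Set

namespace Real

theorem hasDerivAt_tanh (x : ℝ) : HasDerivAt tanh (1 / cosh x ^ 2) x := by
  have h : HasDerivAt (fun y => sinh y / cosh y)
      ((cosh x * cosh x - sinh x * sinh x) / cosh x ^ 2) x :=
    (hasDerivAt_sinh x).div (hasDerivAt_cosh x) (cosh_pos x).ne'
  rw [show cosh x * cosh x - sinh x * sinh x = 1 by linear_combination cosh_sq x] at h
  simpa only [← tanh_eq_sinh_div_cosh] using h

theorem continuous_tanh : Continuous tanh :=
  continuous_iff_continuousAt.2 fun x => (hasDerivAt_tanh x).continuousAt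

theorem antitoneOn_tanh_div : AntitoneOn (fun x => tanh x / x) (Ioi 0) := by
  have hderiv : ∀ x ≠ 0, HasDerivAt (fun x => tanh x / x)
      ((1 / cosh x ^ 2 * x - tanh x * 1) / x ^ 2) x := fun x hx =>
    (hasDerivAt_tanh x).div (hasDerivAt_id x) hx
  apply antitoneOn_of_deriv_nonpos (convex_Ioi 0)
  · exact fun x hx => (hderiv x (ne_of_gt hx)).continuousAt.continuousWithinAt
  · rw [interior_Ioi]
    exact fun x hx => (hderiv x (ne_of_gt hx)).differentiableAt.differentiableWithinAt
  · rw [interior_Ioi]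
    intro x hx
    rw [(hderiv x (ne_of_gt hx)).deriv]
    apply div_nonpos_of_nonpos_of_nonneg _ (sq_nonneg x)
    have hc := cosh_pos x
    -- the numerator is `(x - sinh x * cosh x) / cosh x ^ 2`, and `2 * x ≤ sinh (2 * x)`
    have h2x : 2 * x ≤ 2 * sinh x * cosh x :=
      sinh_two_mul x ▸ self_le_sinh_iff.2 (by linarith [mem_Ioi.1 hx])
    rw [tanh_eq_sinh_div_cosh, sub_nonpos, mul_one, one_div, inv_mul_eq_div,
      div_le_div_iff₀ (pow_pos hc 2) hc]
    nlinarith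

end Real

theorem antitoneOn_one_div_mul_tanh_div {c : ℝ} (hc : 0 < c) :
    AntitoneOn (fun x => 1 / x * tanh (x / c)) (Ioi 0) := by
  intro x hx y hy hxy
  have h := antitoneOn_tanh_div (div_pos hx hc) (div_pos hy hc)
    (div_le_div_of_nonneg_right hxy hc.le)
  have hx' := (mem_Ioi.1 hx).ne'
  have hy' := (mem_Ioi.1 hy).ne'
  calc 1 / y * tanh (y / c) = tanh (y / c) / (y / c) / c := by field_simp
    _ ≤ tanh (x / c) / (x / c) / c := by gcongr
    _ = 1 / x * tanh (x / c) := by field_simp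

noncomputable def gapIntegrand (T Δ ξ : ℝ) : ℝ :=
  1 / √(ξ ^ 2 + Δ ^ 2) * tanh (√(ξ ^ 2 + Δ ^ 2) / (2 * T))

noncomputable def gapIntegral (ε ω T Δ : ℝ) : ℝ :=
  ∫ ξ in ε..ω, gapIntegrand T Δ ξ

theorem intervalIntegrable_gapIntegrand (T Δ : ℝ) {ε ω : ℝ} (hε : 0 < ε) (hεω : ε ≤ ω) :
    IntervalIntegrable (gapIntegrand T Δ) MeasureTheory.volume ε ω := by
  apply ContinuousOn.intervalIntegrable
  rw [uIcc_of_le hεω]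
  have hE : Continuous fun ξ : ℝ => √(ξ ^ 2 + Δ ^ 2) := by fun_prop
  refine (continuousOn_const.div hE.continuousOn fun ξ hξ => ?_).mul
    (continuous_tanh.comp (hE.div_const _)).continuousOn
  have : 0 < ξ := hε.trans_le hξ.1
  positivity

theorem antitoneOn_gapIntegral {ε ω T : ℝ} (hε : 0 < ε) (hεω : ε ≤ ω) (hT : 0 < T) :
    AntitoneOn (gapIntegral ε ω T) (Ici 0) := by
  intro Δ₂ hΔ₂ Δ₁ _ h
  refine intervalIntegral.integral_mono_on hεω (intervalIntegrable_gapIntegrand T Δ₁ hε hεω)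
    (intervalIntegrable_gapIntegrand T Δ₂ hε hεω) fun ξ hξ => ?_
  have : 0 < ξ := hε.trans_le hξ.1
  have hΔsq : Δ₂ ^ 2 ≤ Δ₁ ^ 2 := pow_le_pow_left₀ (mem_Ici.1 hΔ₂) h 2
  exact antitoneOn_one_div_mul_tanh_div (by positivity) (by positivity : 0 < √(ξ ^ 2 + Δ₂ ^ 2))
    (by positivity : 0 < √(ξ ^ 2 + Δ₁ ^ 2)) (by gcongr)

theorem stmt9_general (U₁ U₂ ε ω : ℝ) (hε : 0 < ε) (hεω : ε < ω)
    (hU₁ : 0 < U₁) (hU : U₁ < U₂)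
    (T Δ₁ Δ₂ : ℝ) (hT : 0 < T)
    (hΔ₁eq : 1 = U₁ * ∫ ξ in ε..ω,
      (1 / Real.sqrt (ξ ^ 2 + Δ₁ ^ 2)) * Real.tanh (Real.sqrt (ξ ^ 2 + Δ₁ ^ 2) / (2 * T)))
    (hΔ₂ : 0 ≤ Δ₂)
    (hΔ₂eq : 1 = U₂ * ∫ ξ in ε..ω,
      (1 / Real.sqrt (ξ ^ 2 + Δ₂ ^ 2)) * Real.tanh (Real.sqrt (ξ ^ 2 + Δ₂ ^ 2) / (2 * T))) :
    Δ₁ < Δ₂ := by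
  change 1 = U₁ * gapIntegral ε ω T Δ₁ at hΔ₁eq
  change 1 = U₂ * gapIntegral ε ω T Δ₂ at hΔ₂eq
  by_contra! h
  have hle : gapIntegral ε ω T Δ₁ ≤ gapIntegral ε ω T Δ₂ :=
    antitoneOn_gapIntegral hε hεω.le hT hΔ₂ (hΔ₂.trans h) h
  have hI₂ : 0 < gapIntegral ε ω T Δ₂ :=
    (pos_iff_pos_of_mul_pos (hΔ₂eq ▸ one_pos)).1 (hU₁.trans hU)
  have : U₁ * gapIntegral ε ω T Δ₁ < U₂ * gapIntegral ε ω T Δ₂ :=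
    calc U₁ * gapIntegral ε ω T Δ₁ ≤ U₁ * gapIntegral ε ω T Δ₂ := by gcongr
      _ < U₂ * gapIntegral ε ω T Δ₂ := by gcongr
  linarith

/-- If 0 < U₁ < U₂ and 0 < T < τ₂ with T < τ₁, then Δ₁(T) < Δ₂(T), where Δ_k(T) is the
unique nonnegative solution of the simple gap equation with coupling U_k at temperature T. -/
theorem stmt9 (U₁ U₂ ε ω τ₁ τ₂ : ℝ) (hε : 0 < ε) (hεω : ε < ω)
    (hU₁ : 0 < U₁) (hU : U₁ < U₂)
    (hτ₁pos : 0 < τ₁) (hτ₂pos : 0 < τ₂)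
    (hτ₁ : 1 = U₁ * ∫ ξ in ε..ω, (1 / ξ) * Real.tanh (ξ / (2 * τ₁)))
    (hτ₂ : 1 = U₂ * ∫ ξ in ε..ω, (1 / ξ) * Real.tanh (ξ / (2 * τ₂)))
    (T Δ₁ Δ₂ : ℝ) (hT : 0 < T) (hTτ₂ : T < τ₂) (hTτ₁ : T < τ₁)
    (hΔ₁ : 0 ≤ Δ₁)
    (hΔ₁eq : 1 = U₁ * ∫ ξ in ε..ω,
      (1 / Real.sqrt (ξ ^ 2 + Δ₁ ^ 2)) * Real.tanh (Real.sqrt (ξ ^ 2 + Δ₁ ^ 2) / (2 * T)))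
    (hΔ₂ : 0 ≤ Δ₂)
    (hΔ₂eq : 1 = U₂ * ∫ ξ in ε..ω,
      (1 / Real.sqrt (ξ ^ 2 + Δ₂ ^ 2)) * Real.tanh (Real.sqrt (ξ ^ 2 + Δ₂ ^ 2) / (2 * T))) :
    Δ₁ < Δ₂ :=
  stmt9_general U₁ U₂ ε ω hε hεω hU₁ hU T Δ₁ Δ₂ hT hΔ₁eq hΔ₂ hΔ₂eq
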